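/- Let B > 1, δ > 0, r a positive integer, and let b_1,…,b_r be integers with B ≤ b_i < 2B and gcd(b_i, b_j) < B^{δ²/r²} for all 1 ≤ i < j ≤ r. Then for any integers a_1,…,a_r with gcd(a_i, b_i) = 1, the denominator of a_1/b_1 + ⋯ + a_r/b_r (written in lowest terms) is at least B^{r − 2δ²}. -/

import Mathlib

lemma natgcd_mul_dvd (k m n : ℕ) : Nat.gcd k (m * n) ∣ Nat.gcd k m * Nat.gcd k n := by
  simpa [gcd_eq_nat_gcd] using gcd_mul_dvd_mul_gcd k m n

lemma gcd_prod_dvd {ι : Type*} (s : Finset ι) (f : ι → ℕ) (k : ℕ) :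
    Nat.gcd k (∏ i ∈ s, f i) ∣ ∏ i ∈ s, Nat.gcd k (f i) := by
  induction s using Finset.cons_induction with
  | empty => simp
  | cons j s hj ih =>
    rw [Finset.prod_cons, Finset.prod_cons]
    exact (natgcd_mul_dvd k (f j) _).trans (mul_dvd_mul_left _ ih)

lemma den_int_div (a b : ℤ) (hb : 0 < b) (h : Int.gcd a b = 1) :
    ((a:ℚ)/(b:ℚ)).den = b.natAbs := by
  rw [← Rat.divInt_eq_div, Rat.den_divInt, if_neg hb.ne', Int.gcd_comm, h, Nat.div_one]

lemma int_gcd_add_mul_left (a m c : ℤ) : Int.gcd (a + m * c) m = Int.gcd a m := by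
  apply Nat.dvd_antisymm
  · refine Int.natCast_dvd_natCast.mp (Int.dvd_coe_gcd ?_ (Int.gcd_dvd_right _ _))
    have h1 : (Int.gcd (a + m * c) m : ℤ) ∣ a + m * c := Int.gcd_dvd_left _ _
    have h2 : (Int.gcd (a + m * c) m : ℤ) ∣ m := Int.gcd_dvd_right _ _
    have := h1.sub (h2.mul_right c)
    simpa using this
  · refine Int.natCast_dvd_natCast.mp (Int.dvd_coe_gcd ?_ (Int.gcd_dvd_right _ _))
    have h1 : (Int.gcd a m : ℤ) ∣ a := Int.gcd_dvd_left _ _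
    have h2 : (Int.gcd a m : ℤ) ∣ m := Int.gcd_dvd_right _ _
    exact h1.add (h2.mul_right c)

lemma den_add_key (u v : ℚ) :
    u.den * v.den ∣ (u + v).den * (Nat.gcd u.den v.den * Nat.gcd u.den v.den) := by
  set n : ℤ := u.num * v.den + u.den * v.num with hn
  set d : ℤ := (u.den : ℤ) * v.den with hdd
  have hd0 : d ≠ 0 := mul_ne_zero (Int.natCast_ne_zero.mpr u.den_nz) (Int.natCast_ne_zero.mpr v.den_nz)
  have hden : (u + v).den = d.natAbs / Int.gcd n d := by
    rw [Rat.add_num_den u v, Rat.den_divInt, if_neg hd0, Int.gcd_comm]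
  have heq : u.den * v.den = (u + v).den * Int.gcd n d := by
    have hdabs : d.natAbs = u.den * v.den := by
      rw [hdd, Int.natAbs_mul, Int.natAbs_natCast, Int.natAbs_natCast]
    rw [← hdabs, hden]
    exact (Nat.div_mul_cancel (Nat.gcd_dvd_right _ _)).symm
  rw [heq]
  refine Nat.mul_dvd_mul_left _ ?_
  have h1 : Int.gcd n (u.den : ℤ) ∣ Nat.gcd u.den v.den := by
    have e1 : Int.gcd n (u.den : ℤ) = Int.gcd (u.num * v.den) (u.den : ℤ) := by
      have hne : n = u.num * v.den + (u.den : ℤ) * v.num := by rw [hn]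
      rw [hne, int_gcd_add_mul_left]
    have e2 : Int.gcd (u.num * v.den) (u.den : ℤ) =
        Nat.gcd u.den (u.num.natAbs * v.den) := by
      rw [Int.gcd_def, Int.natAbs_mul, Int.natAbs_natCast, Int.natAbs_natCast, Nat.gcd_comm]
    rw [e1, e2]
    have h3 := natgcd_mul_dvd u.den u.num.natAbs v.den
    have h4 : Nat.gcd u.den u.num.natAbs = 1 := Nat.Coprime.gcd_eq_one (u.reduced.symm)
    simpa [h4] using h3
  have h2 : Int.gcd n (v.den : ℤ) ∣ Nat.gcd u.den v.den := by
    have e1 : Int.gcd n (v.den : ℤ) = Int.gcd ((u.den : ℤ) * v.num) (v.den : ℤ) := by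
      have hne : n = (u.den : ℤ) * v.num + (v.den : ℤ) * u.num := by rw [hn]; ring
      rw [hne, int_gcd_add_mul_left]
    have e2 : Int.gcd ((u.den : ℤ) * v.num) (v.den : ℤ) =
        Nat.gcd v.den (u.den * v.num.natAbs) := by
      rw [Int.gcd_def, Int.natAbs_mul, Int.natAbs_natCast, Int.natAbs_natCast, Nat.gcd_comm]
    rw [e1, e2]
    have h3 := natgcd_mul_dvd v.den u.den v.num.natAbs
    have h4 : Nat.gcd v.den v.num.natAbs = 1 := Nat.Coprime.gcd_eq_one (v.reduced.symm)
    have h5 : Nat.gcd v.den u.den = Nat.gcd u.den v.den := Nat.gcd_comm _ _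
    simpa [h4, h5] using h3
  have hsplit : Int.gcd n d ∣ Int.gcd n (u.den : ℤ) * Int.gcd n (v.den : ℤ) := by
    have e3 : Int.gcd n d = Nat.gcd n.natAbs (u.den * v.den) := by
      rw [Int.gcd_def, hdd, Int.natAbs_mul, Int.natAbs_natCast, Int.natAbs_natCast]
    rw [e3]
    exact natgcd_mul_dvd n.natAbs u.den v.den
  exact hsplit.trans (mul_dvd_mul h1 h2)

/-- Lower bound for the denominator of a sum of fractions with pairwise
almost-coprime denominators. -/
theorem stmt0 (r : ℕ) (hr : 1 ≤ r) (B δ : ℝ) (hB : 1 < B) (hδ : 0 < δ)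
    (b : Fin r → ℤ) (hb : ∀ i, B ≤ (b i : ℝ) ∧ ((b i : ℝ)) < 2 * B)
    (hgcd : ∀ i j, i < j → ((Int.gcd (b i) (b j) : ℝ)) < B ^ (δ ^ 2 / (r : ℝ) ^ 2))
    (a : Fin r → ℤ) (ha : ∀ i, Int.gcd (a i) (b i) = 1) :
    B ^ ((r : ℝ) - 2 * δ ^ 2) ≤ (((∑ i, (a i : ℚ) / (b i : ℚ)).den : ℝ)) := by
  have hB0 : (0:ℝ) < B := lt_trans one_pos hB
  set c : ℝ := B ^ (δ ^ 2 / (r : ℝ) ^ 2) with hc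
  have hrR : (0:ℝ) < (r:ℝ) := by exact_mod_cast hr
  have hc1 : 1 ≤ c := Real.one_le_rpow hB.le (by positivity)
  have hc0 : (0:ℝ) < c := lt_of_lt_of_le one_pos hc1
  have hbpos : ∀ i, 0 < b i := fun i => by
    have h1 : (0:ℝ) < (b i : ℝ) := lt_of_lt_of_le hB0 (hb i).1
    exact_mod_cast h1
  have hbR : ∀ i, (((b i).natAbs : ℕ) : ℝ) = ((b i : ℝ)) := fun i => by
    rw [Nat.cast_natAbs, abs_of_pos (hbpos i)]
  have hgcd' : ∀ i j : Fin r, i ≠ j → ((Int.gcd (b i) (b j) : ℝ)) ≤ c := by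
    intro i j hij
    rcases lt_or_gt_of_ne hij with h | h
    · exact (hgcd i j h).le
    · rw [Int.gcd_comm]; exact (hgcd j i h).le
  have key : ∀ s : Finset (Fin r),
      (∑ i ∈ s, (a i : ℚ) / (b i : ℚ)).den ∣ (∏ i ∈ s, (b i).natAbs) ∧
      B ^ s.card ≤ (((∑ i ∈ s, (a i : ℚ) / (b i : ℚ)).den : ℝ))
        * c ^ (s.card * (s.card - 1)) := by
    intro s
    induction s using Finset.cons_induction with
    | empty => simp
    | cons j s hj ih =>
      rw [Finset.sum_cons, Finset.prod_cons, Finset.card_cons]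
      set u : ℚ := ∑ i ∈ s, (a i : ℚ) / (b i : ℚ) with hu
      set v : ℚ := (a j : ℚ) / (b j : ℚ) with hv
      set k := s.card with hk
      have hvden : v.den = (b j).natAbs := den_int_div _ _ (hbpos j) (ha j)
      constructor
      · exact (Rat.add_den_dvd v u).trans (mul_dvd_mul (hvden ▸ dvd_refl _) ih.1)
      · set G := Nat.gcd v.den u.den with hG
        have hGpos : 0 < G := Nat.gcd_pos_of_pos_right _ u.pos
        have hGle : (G : ℝ) ≤ c ^ k := by
          have hGdvd : G ∣ ∏ i ∈ s, Int.gcd (b i) (b j) := by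
            have t1 : G ∣ Nat.gcd ((b j).natAbs) (∏ i ∈ s, (b i).natAbs) :=
              Nat.dvd_gcd (hvden ▸ Nat.gcd_dvd_left _ _) ((Nat.gcd_dvd_right _ _).trans ih.1)
            refine t1.trans ((gcd_prod_dvd s _ _).trans (dvd_of_eq ?_))
            refine Finset.prod_congr rfl fun i _ => ?_
            rw [Int.gcd_comm (b i) (b j), Int.gcd_def]
          have hPpos : 0 < ∏ i ∈ s, Int.gcd (b i) (b j) := by
            refine Finset.prod_pos fun i _ => ?_
            exact Int.gcd_pos_of_ne_zero_left _ (hbpos i).ne'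
          have hle := Nat.le_of_dvd hPpos hGdvd
          calc (G : ℝ) ≤ ((∏ i ∈ s, Int.gcd (b i) (b j) : ℕ) : ℝ) := by exact_mod_cast hle
            _ = ∏ i ∈ s, ((Int.gcd (b i) (b j) : ℕ) : ℝ) := by push_cast; ring
            _ ≤ ∏ i ∈ s, c := Finset.prod_le_prod (fun i _ => by positivity)
                (fun i hi => hgcd' i j (by rintro rfl; exact hj hi))
            _ = c ^ k := Finset.prod_const c
        have hA3 : ((v.den : ℝ)) * (u.den : ℝ) ≤ ((v + u).den : ℝ) * ((G:ℝ) * G) := by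
          have h0 : 0 < (v + u).den * (G * G) :=
            Nat.mul_pos (v + u).pos (Nat.mul_pos hGpos hGpos)
          have := Nat.le_of_dvd h0 (den_add_key v u)
          exact_mod_cast this
        have hBv : B ≤ ((v.den : ℕ) : ℝ) := by
          rw [hvden, hbR j]; exact (hb j).1
        have hexp : k + (k + k * (k - 1)) = (k + 1) * k := by
          cases k with
          | zero => rfl
          | succ n => simp [Nat.succ_sub_one]; ring
        have hfinal : B ^ (k + 1) ≤ ((v + u).den : ℝ) * c ^ ((k + 1) * k) := by
          calc B ^ (k + 1) = B * B ^ k := by ring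
            _ ≤ ((v.den : ℕ) : ℝ) * ((u.den : ℝ) * c ^ (k * (k - 1))) :=
                mul_le_mul hBv ih.2 (by positivity) (le_trans hB0.le hBv)
            _ = (((v.den : ℝ)) * (u.den : ℝ)) * c ^ (k * (k - 1)) := by ring
            _ ≤ (((v + u).den : ℝ) * ((G:ℝ) * G)) * c ^ (k * (k - 1)) :=
                mul_le_mul_of_nonneg_right hA3 (by positivity)
            _ ≤ (((v + u).den : ℝ) * (c ^ k * c ^ k)) * c ^ (k * (k - 1)) := by
                have hGnn : (0:ℝ) ≤ (G:ℝ) := by positivity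
                have h2 : (G:ℝ) * G ≤ c ^ k * c ^ k :=
                  mul_le_mul hGle hGle hGnn (by positivity)
                have := mul_le_mul_of_nonneg_left h2 (by positivity : (0:ℝ) ≤ ((v+u).den : ℝ))
                exact mul_le_mul_of_nonneg_right this (by positivity)
            _ = ((v + u).den : ℝ) * c ^ ((k + 1) * k) := by
                rw [← hexp, pow_add, pow_add]; ring
        simpa [Nat.add_sub_cancel] using hfinal
  obtain ⟨-, hkey⟩ := key Finset.univ
  rw [Finset.card_univ, Fintype.card_fin] at hkey
  set D : ℝ := (((∑ i, (a i : ℚ) / (b i : ℚ)).den : ℝ)) with hD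
  set e : ℝ := (δ ^ 2 / (r : ℝ) ^ 2) * ((r * (r - 1) : ℕ) : ℝ) with he
  have hcN : c ^ (r * (r - 1)) = B ^ e := by
    rw [he, hc, ← Real.rpow_natCast (B ^ (δ ^ 2 / (r : ℝ) ^ 2)) (r * (r-1)),
      ← Real.rpow_mul hB0.le]
  have hBr : (B : ℝ) ^ r = B ^ ((r : ℕ) : ℝ) := (Real.rpow_natCast B r).symm
  have heN : e ≤ 2 * δ ^ 2 := by
    have h1 : ((r * (r - 1) : ℕ) : ℝ) ≤ 2 * (r : ℝ) ^ 2 := by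
      push_cast [Nat.cast_sub hr]
      nlinarith [hrR]
    have h2 : e ≤ δ ^ 2 / (r : ℝ) ^ 2 * (2 * (r : ℝ) ^ 2) :=
      mul_le_mul_of_nonneg_left h1 (by positivity)
    have h3 : δ ^ 2 / (r : ℝ) ^ 2 * (2 * (r : ℝ) ^ 2) = 2 * δ ^ 2 := by
      field_simp
    linarith [h2, h3.le]
  have hDpos : (0:ℝ) < D := by
    rw [hD]; exact_mod_cast (∑ i, (a i : ℚ) / (b i : ℚ)).pos
  have hstep : B ^ ((r : ℝ) - e) ≤ D := by
    rw [Real.rpow_sub hB0, div_le_iff₀ (Real.rpow_pos_of_pos hB0 e)]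
    calc B ^ ((r : ℝ)) = B ^ r := Real.rpow_natCast B r
      _ ≤ D * c ^ (r * (r - 1)) := hkey
      _ = D * B ^ e := by rw [hcN]
  calc B ^ ((r : ℝ) - 2 * δ ^ 2) ≤ B ^ ((r : ℝ) - e) := by
        apply Real.rpow_le_rpow_left_iff hB |>.mpr
        linarith
    _ ≤ D := hstep
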